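/- arXiv:1406.7305 — 2 statements merged into one kernel-verified Lean document; each statement's English description precedes it below -/
import Mathlib

section
/- The sequence a_n = ((10n)/(3π) · tan(π/(2n)))² for n ≥ 2 is strictly decreasing, the sequence b_n = 1/(2(1 − (π/(2n))·cot(π/(2n)))) for n ≥ 2 is strictly increasing, and a_3 < b_3. -/
/-!
Write `x_n = π / (2n) ∈ (0, π/2)` and `t_n = tan x_n / x_n`. Then `a_n = (5/3 · t_n)²` and,
since `x cot x = (tan x / x)⁻¹`, `b_n = 1 / (2 (1 - t_n⁻¹))`. The function `tan x / x` is strictly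
increasing on `(0, π/2)` and exceeds `1` there, so `t_n > 1` decreases strictly with `n`; this gives
both monotonicity claims. At `n = 3`, `a_3 = 100 / (3π²)` and `b_3 = 1 / (2 (1 - π√3/6))`, and the
crude bounds `3.14 < π < 3.15`, `1.7 < √3 < 1.8` separate them.
-/

open Real Set

lemma strictMonoOn_tan_div_self : StrictMonoOn (fun x : ℝ => tan x / x) (Ioo 0 (π / 2)) := by
  have hcos : ∀ x ∈ Ioo 0 (π / 2), 0 < cos x := fun x hx =>
    cos_pos_of_mem_Ioo ⟨by linarith [hx.1, pi_pos], hx.2⟩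
  refine strictMonoOn_of_deriv_pos (convex_Ioo 0 (π / 2)) ?_ fun x hx => ?_
  · exact (continuousOn_tan.mono fun x hx => (hcos x hx).ne').div continuousOn_id
      fun x hx => hx.1.ne'
  rw [interior_Ioo] at hx
  have hcx := hcos x hx
  have hderiv : HasDerivAt (fun x => tan x / x) ((1 / cos x ^ 2 * x - tan x * 1) / x ^ 2) x :=
    (hasDerivAt_tan hcx.ne').div (hasDerivAt_id x) hx.1.ne'
  rw [hderiv.deriv, tan_eq_sin_div_cos]
  have hsin : 0 < sin x := sin_pos_of_pos_of_lt_pi hx.1 (by linarith [hx.2, pi_pos])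
  -- the numerator is `(x - sin x cos x) / cos² x`, positive because `sin x < x` and `cos x ≤ 1`
  have : sin x * cos x < x := by nlinarith [sin_lt hx.1, cos_le_one x]
  have key : 0 < 1 / cos x ^ 2 * x - sin x / cos x * 1 := by
    rw [show 1 / cos x ^ 2 * x - sin x / cos x * 1 = (x - sin x * cos x) / cos x ^ 2 by
      field_simp]
    exact div_pos (by linarith) (by positivity)
  exact div_pos key (pow_pos hx.1 2)

lemma one_lt_tan_div_self {x : ℝ} (hx0 : 0 < x) (hx : x < π / 2) : 1 < tan x / x :=
  (one_lt_div hx0).2 (lt_tan hx0 hx)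

lemma mul_cot_eq_inv_tan_div_self (x : ℝ) : x * cot x = (tan x / x)⁻¹ := by
  rw [cot_eq_cos_div_sin, tan_eq_sin_div_cos, inv_div, div_div_eq_mul_div, mul_div_assoc]

lemma strictAntiOn_one_div_two_mul_one_sub_inv :
    StrictAntiOn (fun t : ℝ => 1 / (2 * (1 - t⁻¹))) (Ioi 1) := by
  intro s hs t ht hst
  have : s⁻¹ < 1 := inv_lt_one_of_one_lt₀ hs
  have : t⁻¹ < s⁻¹ := inv_strictAnti₀ (zero_lt_one.trans hs) hst
  dsimp only
  gcongr

lemma pi_div_two_mul_mem_Ioo {n : ℕ} (hn : 2 ≤ n) : π / (2 * n) ∈ Ioo 0 (π / 2) := by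
  have : (2 : ℝ) ≤ n := by exact_mod_cast hn
  exact ⟨by positivity, div_lt_div_of_pos_left pi_pos two_pos (by linarith)⟩

lemma pi_div_two_mul_succ_lt {n : ℕ} (hn : n ≠ 0) : π / (2 * (n + 1 : ℕ)) < π / (2 * n) := by
  have : (0 : ℝ) < n := by exact_mod_cast Nat.pos_of_ne_zero hn
  push_cast
  exact div_lt_div_of_pos_left pi_pos (by positivity) (by linarith)

lemma tan_div_self_pi_div_two_mul_succ_lt {n : ℕ} (hn : 2 ≤ n) :
    tan (π / (2 * (n + 1 : ℕ))) / (π / (2 * (n + 1 : ℕ))) < tan (π / (2 * n)) / (π / (2 * n)) :=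
  strictMonoOn_tan_div_self (pi_div_two_mul_mem_Ioo (by omega)) (pi_div_two_mul_mem_Ioo hn)
    (pi_div_two_mul_succ_lt (by omega))

lemma hundred_div_three_mul_pi_sq_lt : 100 / (3 * π ^ 2) < 1 / (2 * (1 - π / 6 * √3)) := by
  have hs : (1.7 : ℝ) < √3 := by rw [lt_sqrt] <;> norm_num
  have hs' : √3 < 1.8 := by rw [sqrt_lt'] <;> norm_num
  have := pi_gt_d2
  have := pi_lt_d2
  rw [div_lt_div_iff₀ (by positivity) (by nlinarith)]
  nlinarith

/-- Monotonicity of the two auxiliary sequences in the proof of Theorem 3.5,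
together with the crossing inequality a₃ < b₃. -/
theorem aux_sequences_monotone :
    let a : ℕ → ℝ := fun n => ((10 * n) / (3 * Real.pi) * Real.tan (Real.pi / (2 * n))) ^ 2
    let b : ℕ → ℝ := fun n => 1 / (2 * (1 - (Real.pi / (2 * n)) * Real.cot (Real.pi / (2 * n))))
    (∀ n : ℕ, 2 ≤ n → a (n + 1) < a n) ∧
      (∀ n : ℕ, 2 ≤ n → b n < b (n + 1)) ∧
      a 3 < b 3 := by
  intro a b
  have ha : ∀ n : ℕ, n ≠ 0 → a n = (5 / 3 * (tan (π / (2 * n)) / (π / (2 * n)))) ^ 2 := by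
    intro n hn
    have : (n : ℝ) ≠ 0 := by exact_mod_cast hn
    simp only [a]
    field_simp
    ring
  have hb : ∀ n : ℕ, b n = 1 / (2 * (1 - (tan (π / (2 * n)) / (π / (2 * n)))⁻¹)) := fun n => by
    simp only [b, mul_cot_eq_inv_tan_div_self]
  have hone : ∀ n : ℕ, 2 ≤ n → 1 < tan (π / (2 * n)) / (π / (2 * n)) := fun n hn =>
    one_lt_tan_div_self (pi_div_two_mul_mem_Ioo hn).1 (pi_div_two_mul_mem_Ioo hn).2
  refine ⟨fun n hn => ?_, fun n hn => ?_, ?_⟩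
  · rw [ha (n + 1) (by omega), ha n (by omega)]
    have := hone (n + 1) (by omega)
    gcongr (5 / 3 * ?_) ^ 2
    exact tan_div_self_pi_div_two_mul_succ_lt hn
  · rw [hb, hb]
    exact strictAntiOn_one_div_two_mul_one_sub_inv (hone (n + 1) (by omega)) (hone n hn)
      (tan_div_self_pi_div_two_mul_succ_lt hn)
  · convert hundred_div_three_mul_pi_sq_lt using 1
    · simp only [a]
      norm_num [tan_pi_div_six]
      field_simp
      norm_num
    · simp only [b]
      norm_num [cot_eq_cos_div_sin]
      field_simp
end

section
/- For n ≥ 2 an integer and a real with |a| < 1/(n²−1), the convex body Ω_{n,a} with support function h(t) = 1 + a cos(nt) has perimeter 2π, area A = π − π(n²−1)a²/2, and elastic energy E = π/√(1 − (n²−1)²a²). Consequently, for the normalized points (x,y) = (A/π, E/π) and any fixed y₀ ≥ 1, the points (x(a;n), y(a;n)) with y(a;n) = y₀ satisfy x(a;n) → 1 as n → ∞. -/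
open Real intervalIntegral Filter

lemma den_pos' {b : ℝ} (hb : |b| < 1) (x : ℝ) : 0 < 1 - b * Real.cos x := by
  have h1 : b * Real.cos x ≤ |b * Real.cos x| := le_abs_self _
  have h2 : |b * Real.cos x| ≤ |b| := by
    rw [abs_mul]
    calc |b| * |Real.cos x| ≤ |b| * 1 :=
          mul_le_mul_of_nonneg_left (Real.abs_cos_le_one x) (abs_nonneg b)
      _ = |b| := mul_one _
  nlinarith

lemma key_deriv' {b : ℝ} (hb : |b| < 1) (t : ℝ) :
    HasDerivAt (fun t => (1 / Real.sqrt (1 - b ^ 2)) *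
      (t + 2 * Real.arctan (b * Real.sin t / (1 - b * Real.cos t + Real.sqrt (1 - b ^ 2)))))
      (1 / (1 - b * Real.cos t)) t := by
  set s := Real.sqrt (1 - b ^ 2) with hs
  have hb2 : 0 < 1 - b ^ 2 := by nlinarith [abs_nonneg b, sq_abs b]
  have hspos : 0 < s := Real.sqrt_pos.mpr hb2
  have hs2 : s ^ 2 = 1 - b ^ 2 := Real.sq_sqrt hb2.le
  have hD : 0 < 1 - b * Real.cos t + s := by linarith [den_pos' hb t]
  have h1 : HasDerivAt (fun t => b * Real.sin t) (b * Real.cos t) t :=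
    (Real.hasDerivAt_sin t).const_mul b
  have h2 : HasDerivAt (fun t => 1 - b * Real.cos t + s) (b * Real.sin t) t := by
    have := ((Real.hasDerivAt_cos t).const_mul b)
    have h := ((hasDerivAt_const t (1:ℝ)).sub this).add_const s
    simpa using h
  have h3 := h1.div h2 hD.ne'
  have h4 := (Real.hasDerivAt_arctan (b * Real.sin t / (1 - b * Real.cos t + s))).comp t h3
  have h5 := ((hasDerivAt_id t).add (h4.const_mul 2)).const_mul (1 / s)
  refine h5.congr_deriv ?_
  set c := Real.cos t
  set u := Real.sin t
  set D := 1 - b * c + s with hDdef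
  have hsin : u ^ 2 = 1 - c ^ 2 := Real.sin_sq t
  have hone : (0:ℝ) < 1 + s := by linarith
  have hne : 0 < 1 - b * c := den_pos' hb t
  have hA : D ^ 2 + (b * u) ^ 2 = 2 * (1 - b * c) * (1 + s) := by
    rw [hDdef]; linear_combination hs2 + b ^ 2 * hsin
  have hX : b * c * D - b * u * (b * u) = b * c * (1 + s) - b ^ 2 := by
    rw [hDdef]; linear_combination (-b ^ 2) * hsin
  have hstep : 1 / (1 + (b * u / D) ^ 2) * ((b * c * D - b * u * (b * u)) / D ^ 2)
      = (b * c * (1 + s) - b ^ 2) / (2 * (1 - b * c) * (1 + s)) := by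
    rw [← hX, ← hA]
    field_simp
  rw [hstep]
  field_simp
  linear_combination (-1) * hs2

lemma integral_inv' {b : ℝ} (hb : |b| < 1) {n : ℕ} (hn : 1 ≤ n) :
    ∫ t in (0:ℝ)..(2 * Real.pi), 1 / (1 - b * Real.cos (n * t))
      = 2 * Real.pi / Real.sqrt (1 - b ^ 2) := by
  have hb2 : 0 < 1 - b ^ 2 := by nlinarith [abs_nonneg b, sq_abs b]
  have hspos : 0 < Real.sqrt (1 - b ^ 2) := Real.sqrt_pos.mpr hb2
  have hnR : (0:ℝ) < n := by exact_mod_cast hn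
  set s := Real.sqrt (1 - b ^ 2)
  set G : ℝ → ℝ := fun t => (1 / s) *
      (t + 2 * Real.arctan (b * Real.sin t / (1 - b * Real.cos t + s))) with hG
  have hder : ∀ t ∈ Set.uIcc (0:ℝ) (2 * Real.pi),
      HasDerivAt (fun t => (n:ℝ)⁻¹ * G ((n:ℝ) * t)) (1 / (1 - b * Real.cos (n * t))) t := by
    intro t _
    have hmul : HasDerivAt (fun t : ℝ => (n:ℝ) * t) (n:ℝ) t := by
      simpa using (hasDerivAt_id t).const_mul (n:ℝ)
    have := ((key_deriv' hb ((n:ℝ) * t)).comp t hmul).const_mul ((n:ℝ)⁻¹)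
    refine this.congr_deriv ?_
    field_simp
  have hcont : IntervalIntegrable (fun t => 1 / (1 - b * Real.cos (n * t)))
      MeasureTheory.volume 0 (2 * Real.pi) := by
    apply Continuous.intervalIntegrable
    exact continuous_const.div (by fun_prop) (fun x => (den_pos' hb _).ne')
  rw [intervalIntegral.integral_eq_sub_of_hasDerivAt hder hcont]
  have hsin1 : Real.sin ((n:ℝ) * (2 * Real.pi)) = 0 := by
    have : (n:ℝ) * (2 * Real.pi) = ((2 * n : ℕ) : ℝ) * Real.pi := by push_cast; ring
    rw [this]; exact Real.sin_nat_mul_pi (2 * n)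
  have hG2 : G ((n:ℝ) * (2 * Real.pi)) = (1 / s) * ((n:ℝ) * (2 * Real.pi)) := by
    simp [hG, hsin1]
  have hG0 : G ((n:ℝ) * 0) = 0 := by rw [mul_zero, hG]; simp
  show (n:ℝ)⁻¹ * G ((n:ℝ) * (2 * Real.pi)) - (n:ℝ)⁻¹ * G ((n:ℝ) * 0) = _
  rw [hG2, hG0]
  field_simp; ring

lemma sin_ant (m : ℝ) (hm : m ≠ 0) (t : ℝ) :
    HasDerivAt (fun t => Real.sin (m * t) / m) (Real.cos (m * t)) t := by
  have hmul : HasDerivAt (fun t : ℝ => m * t) m t := by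
    simpa using (hasDerivAt_id t).const_mul m
  have := ((Real.hasDerivAt_sin (m * t)).comp t hmul).div_const m
  refine this.congr_deriv ?_
  field_simp

/-- For the bodies Ω_{n,a} with support function 1 + a cos(nt): perimeter 2π,
area π − π(n²−1)a²/2, elastic energy π/√(1 − (n²−1)²a²); moreover along the level
set E = πy₀ the normalized abscissa 1 − (1 − 1/y₀²)/(2(n²−1)) tends to 1 as n → ∞. -/
theorem family_accumulating_on_line (n : ℕ) (hn : 2 ≤ n) (a : ℝ)
    (ha : |a| < 1 / ((n:ℝ) ^ 2 - 1)) :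
    let h : ℝ → ℝ := fun t => 1 + a * Real.cos (n * t)
    let φ : ℝ → ℝ := fun t => 1 + (1 - (n:ℝ) ^ 2) * a * Real.cos (n * t)
    let P : ℝ := ∫ t in (0:ℝ)..(2 * Real.pi), φ t
    let A : ℝ := (1 / 2) * ∫ t in (0:ℝ)..(2 * Real.pi), h t * φ t
    let E : ℝ := (1 / 2) * ∫ t in (0:ℝ)..(2 * Real.pi), 1 / φ t
    P = 2 * Real.pi ∧
      A = Real.pi - Real.pi * ((n:ℝ) ^ 2 - 1) * a ^ 2 / 2 ∧
      E = Real.pi / Real.sqrt (1 - ((n:ℝ) ^ 2 - 1) ^ 2 * a ^ 2) ∧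
      (∀ y₀ : ℝ, 1 ≤ y₀ → E = Real.pi * y₀ →
        A / Real.pi = 1 - (1 - 1 / y₀ ^ 2) / (2 * ((n:ℝ) ^ 2 - 1))) ∧
      (∀ y₀ : ℝ, 1 ≤ y₀ →
        Tendsto (fun m : ℕ => 1 - (1 - 1 / y₀ ^ 2) / (2 * ((m:ℝ) ^ 2 - 1)))
          atTop (nhds 1)) := by
  intro h φ P A E
  have hn2 : (2:ℝ) ≤ (n:ℝ) := by exact_mod_cast hn
  have hq : (0:ℝ) < (n:ℝ) ^ 2 - 1 := by nlinarith
  have hnR : (0:ℝ) < (n:ℝ) := by linarith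
  set b : ℝ := ((n:ℝ) ^ 2 - 1) * a with hbdef
  have hb : |b| < 1 := by
    rw [hbdef, abs_mul, abs_of_pos hq]
    calc ((n:ℝ) ^ 2 - 1) * |a| < ((n:ℝ) ^ 2 - 1) * (1 / ((n:ℝ) ^ 2 - 1)) :=
          mul_lt_mul_of_pos_left ha hq
      _ = 1 := by field_simp
  have hφb : ∀ t, φ t = 1 - b * Real.cos (n * t) := by
    intro t; simp only [φ, hbdef]; ring
  have hsin1 : Real.sin ((n:ℝ) * (2 * Real.pi)) = 0 := by
    have : (n:ℝ) * (2 * Real.pi) = ((2 * n : ℕ) : ℝ) * Real.pi := by push_cast; ring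
    rw [this]; exact Real.sin_nat_mul_pi (2 * n)
  have hsin2 : Real.sin (2 * ((n:ℝ) * (2 * Real.pi))) = 0 := by
    have : 2 * ((n:ℝ) * (2 * Real.pi)) = ((4 * n : ℕ) : ℝ) * Real.pi := by push_cast; ring
    rw [this]; exact Real.sin_nat_mul_pi (4 * n)
  -- Perimeter
  have hP : P = 2 * Real.pi := by
    have hder : ∀ t ∈ Set.uIcc (0:ℝ) (2 * Real.pi),
        HasDerivAt (fun t => t + ((1 - (n:ℝ) ^ 2) * a) * (Real.sin ((n:ℝ) * t) / (n:ℝ)))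
          (φ t) t := by
      intro t _
      have := (hasDerivAt_id t).add ((sin_ant (n:ℝ) hnR.ne' t).const_mul ((1 - (n:ℝ) ^ 2) * a))
      exact this
    have hint : IntervalIntegrable φ MeasureTheory.volume 0 (2 * Real.pi) := by
      apply Continuous.intervalIntegrable; fun_prop
    have := intervalIntegral.integral_eq_sub_of_hasDerivAt hder hint
    simp only [P, this, hsin1]
    simp
  -- Area
  have hA : A = Real.pi - Real.pi * ((n:ℝ) ^ 2 - 1) * a ^ 2 / 2 := by
    have hder : ∀ t ∈ Set.uIcc (0:ℝ) (2 * Real.pi),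
        HasDerivAt (fun t => t + ((2 - (n:ℝ) ^ 2) * a) * (Real.sin ((n:ℝ) * t) / (n:ℝ))
            + ((1 - (n:ℝ) ^ 2) * a ^ 2) * (t / 2 + Real.sin (2 * ((n:ℝ) * t)) / (2 * (n:ℝ)) / 2))
          (h t * φ t) t := by
      intro t _
      have h1 := (sin_ant (n:ℝ) hnR.ne' t).const_mul ((2 - (n:ℝ) ^ 2) * a)
      have hs2 : HasDerivAt (fun t => Real.sin (2 * ((n:ℝ) * t)) / (2 * (n:ℝ)))
          (Real.cos (2 * ((n:ℝ) * t))) t := by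
        have := sin_ant (2 * (n:ℝ)) (by positivity) t
        convert this using 2 <;> ring
      have h2 := (((hasDerivAt_id t).div_const 2).add (hs2.div_const 2)).const_mul
          ((1 - (n:ℝ) ^ 2) * a ^ 2)
      have := ((hasDerivAt_id t).add h1).add h2
      refine this.congr_deriv ?_
      have hcos2 : Real.cos (2 * ((n:ℝ) * t)) = 2 * Real.cos ((n:ℝ) * t) ^ 2 - 1 :=
        Real.cos_two_mul _
      simp only [h, φ]
      rw [hcos2]; ring
    have hint : IntervalIntegrable (fun t => h t * φ t) MeasureTheory.volume 0 (2 * Real.pi) := by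
      apply Continuous.intervalIntegrable
      simp only [h, φ]; fun_prop
    have := intervalIntegral.integral_eq_sub_of_hasDerivAt hder hint
    simp only [A, this, hsin1, hsin2, mul_zero, Real.sin_zero]
    field_simp
    ring
  -- Energy
  have hE : E = Real.pi / Real.sqrt (1 - ((n:ℝ) ^ 2 - 1) ^ 2 * a ^ 2) := by
    have heq : (∫ t in (0:ℝ)..(2 * Real.pi), 1 / φ t)
        = ∫ t in (0:ℝ)..(2 * Real.pi), 1 / (1 - b * Real.cos (n * t)) := by
      apply intervalIntegral.integral_congr
      intro t _
      show 1 / φ t = 1 / (1 - b * Real.cos (n * t))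
      rw [hφb t]
    have := integral_inv' hb (by omega : 1 ≤ n)
    simp only [E, heq, this]
    have : 1 - b ^ 2 = 1 - ((n:ℝ) ^ 2 - 1) ^ 2 * a ^ 2 := by rw [hbdef]; ring
    rw [this]; ring
  refine ⟨hP, hA, hE, ?_, ?_⟩
  · intro y₀ hy₀ hEy
    have hy₀pos : (0:ℝ) < y₀ := by linarith
    have hb2 : 0 < 1 - b ^ 2 := by nlinarith [abs_nonneg b, sq_abs b]
    have hb2' : 1 - ((n:ℝ) ^ 2 - 1) ^ 2 * a ^ 2 = 1 - b ^ 2 := by rw [hbdef]; ring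
    have hspos : 0 < Real.sqrt (1 - b ^ 2) := Real.sqrt_pos.mpr hb2
    rw [hE, hb2'] at hEy
    have hpi : (0:ℝ) < Real.pi := Real.pi_pos
    set s := Real.sqrt (1 - b ^ 2) with hsdef
    have h1 : Real.pi = Real.pi * y₀ * s := (div_eq_iff hspos.ne').1 hEy
    have h2 : y₀ * s = 1 := by
      have := mul_left_cancel₀ hpi.ne' (by linarith : Real.pi * 1 = Real.pi * (y₀ * s))
      linarith
    have hsval : s = 1 / y₀ := eq_one_div_of_mul_eq_one_left (by linear_combination h2)
    have hsq : 1 - b ^ 2 = 1 / y₀ ^ 2 := by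
      rw [← Real.sq_sqrt hb2.le, ← hsdef, hsval, div_pow, one_pow]
    have hb2eq : ((n:ℝ) ^ 2 - 1) ^ 2 * a ^ 2 = 1 - 1 / y₀ ^ 2 := by
      have : b ^ 2 = 1 - 1 / y₀ ^ 2 := by linarith
      rw [hbdef] at this; linear_combination this
    have hxy : (1 - 1 / y₀ ^ 2) / (2 * ((n:ℝ) ^ 2 - 1)) = ((n:ℝ) ^ 2 - 1) * a ^ 2 / 2 := by
      rw [div_eq_div_iff (by positivity) (by norm_num : (2:ℝ) ≠ 0)]
      linear_combination (-2) * hb2eq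
    rw [hA, hxy, div_eq_iff hpi.ne']
    ring
  · intro y₀ _
    have h0 : Tendsto (fun m : ℕ => ((m:ℝ) ^ 2)) atTop atTop := by
      apply tendsto_atTop_mono _ tendsto_natCast_atTop_atTop
      intro m
      rcases Nat.eq_zero_or_pos m with hm | hm
      · simp [hm]
      · have : (1:ℝ) ≤ (m:ℝ) := by exact_mod_cast hm
        nlinarith
    have hmono : Tendsto (fun m : ℕ => 2 * ((m:ℝ) ^ 2 - 1)) atTop atTop := by
      have := tendsto_atTop_add_const_right atTop (-1 : ℝ) h0
      have h2 := this.const_mul_atTop (by norm_num : (0:ℝ) < 2)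
      simpa [sub_eq_add_neg] using h2
    have hz : Tendsto (fun m : ℕ => (1 - 1 / y₀ ^ 2) / (2 * ((m:ℝ) ^ 2 - 1))) atTop (nhds 0) := by
      have hinv := hmono.inv_tendsto_atTop
      have h2 := hinv.const_mul (1 - 1 / y₀ ^ 2)
      simpa [div_eq_mul_inv, Function.comp] using h2
    have hfin := (tendsto_const_nhds : Tendsto (fun _ : ℕ => (1:ℝ)) atTop (nhds 1)).sub hz
    simpa using hfin
end
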